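/- arXiv:2202.07086 — 5 statements merged into one kernel-verified Lean document; each statement's English description precedes it below -/
import Mathlib

section
/- At the socially optimal number of drivers n* = (α·τ·λ_d·(c_r+c_d)/c_d)^{1/(α+1)}, the ratio between the drivers' average waiting time for a dispatch n*/λ_d and the riders' pick-up time η(n*) = τ·(n*)^{−α} equals α·(c_r + c_d)/c_d, independent of λ_r and the distribution of rider values. -/
/-! The ratio `(n / λ_d) / (τ n^{-α})` equals `n^{α+1} / (λ_d τ)`, and `n*` is exactly the positive
root of `n^{α+1} = α τ λ_d (c_r + c_d) / c_d`, so the ratio collapses to `α (c_r + c_d) / c_d`. -/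

theorem Real.div_div_mul_rpow_neg {n : ℝ} (hn : 0 < n) (lam tau a : ℝ) :
    (n / lam) / (tau * n ^ (-a)) = n ^ (a + 1) / (lam * tau) := by
  rw [Real.rpow_add_one hn.ne', Real.rpow_neg hn.le]
  field_simp

/-- At `n* = (α τ λ_d (c_r+c_d)/c_d)^{1/(α+1)}`, the ratio between drivers' average
waiting time `n*/λ_d` and riders' pick-up time `τ (n*)^{-α}` equals `α (c_r+c_d)/c_d`. -/
theorem stmt_1 (lamd tau cd cr alpha : ℝ)
    (hlamd : 0 < lamd) (htau : 0 < tau) (hcd : 0 < cd) (hcr : 0 ≤ cr) (halpha : 0 < alpha)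
    (nstar : ℝ)
    (hnstar : nstar = (alpha * tau * lamd * (cr + cd) / cd) ^ (1 / (alpha + 1))) :
    (nstar / lamd) / (tau * nstar ^ (-alpha)) = alpha * (cr + cd) / cd := by
  have hK : 0 < alpha * tau * lamd * (cr + cd) / cd := by positivity
  have hn : 0 < nstar := hnstar ▸ Real.rpow_pos_of_pos hK _
  have hpow : nstar ^ (alpha + 1) = alpha * tau * lamd * (cr + cd) / cd := by
    rw [hnstar, one_div, Real.rpow_inv_rpow hK.le (by positivity)]
  rw [Real.div_div_mul_rpow_neg hn, hpow]
  field_simp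
end

section
/- Let F̄ : ℝ → (0, ∞) be a strictly decreasing twice-differentiable function such that 1/F̄ is convex. Then for any continuous function p_r : [t₁, t₂] → ℝ with t₁ < t₂, (∫_{t₁}^{t₂} F̄(p_r(t)) dt)/(t₂ − t₁) ≤ F̄( (∫_{t₁}^{t₂} F̄(p_r(t))·p_r(t) dt) / (∫_{t₁}^{t₂} F̄(p_r(t)) dt) ). -/
/-- Supporting line inequality for a convex differentiable function on `ℝ`. -/
lemma tangent_le_aux {g : ℝ → ℝ} (hg : ConvexOn ℝ Set.univ g) {a : ℝ}
    (hd : DifferentiableAt ℝ g a) (x : ℝ) :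
    g a + deriv g a * (x - a) ≤ g x := by
  rcases lt_trichotomy x a with h | h | h
  · have hs := hg.slope_le_deriv (Set.mem_univ x) (Set.mem_univ a) h hd
    rw [slope_def_field] at hs
    have h' : 0 < a - x := by linarith
    have := (div_le_iff₀ h').mp hs
    nlinarith
  · simp [h]
  · have hs := hg.deriv_le_slope (Set.mem_univ a) (Set.mem_univ x) h hd
    rw [slope_def_field] at hs
    have h' : 0 < x - a := by linarith
    have := (le_div_iff₀ h').mp hs
    nlinarith

/-- Jensen-type lemma: if `F̄` is positive, strictly decreasing, twice differentiable,
and `1/F̄` is convex, then the demand-weighted average price bounds the average demand. -/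
theorem stmt_3 (F : ℝ → ℝ)
    (hpos : ∀ v, 0 < F v) (hanti : StrictAnti F) (hsmooth : ContDiff ℝ 2 F)
    (hconv : ConvexOn ℝ Set.univ (fun v => 1 / F v))
    (pr : ℝ → ℝ) (t1 t2 : ℝ) (ht : t1 < t2)
    (hcont : ContinuousOn pr (Set.Icc t1 t2)) :
    (∫ t in t1..t2, F (pr t)) / (t2 - t1)
      ≤ F ((∫ t in t1..t2, F (pr t) * pr t) / (∫ t in t1..t2, F (pr t))) := by
  have hFc : Continuous F := hsmooth.continuous
  have ht' : t1 ≤ t2 := ht.le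
  have huIcc : Set.uIcc t1 t2 = Set.Icc t1 t2 := Set.uIcc_of_le ht'
  have hFpr : ContinuousOn (fun t => F (pr t)) (Set.Icc t1 t2) :=
    hFc.comp_continuousOn hcont
  have hInt1 : IntervalIntegrable (fun t => F (pr t)) MeasureTheory.volume t1 t2 :=
    ContinuousOn.intervalIntegrable (by rw [huIcc]; exact hFpr)
  have hInt2 : IntervalIntegrable (fun t => F (pr t) * pr t) MeasureTheory.volume t1 t2 :=
    ContinuousOn.intervalIntegrable (by rw [huIcc]; exact hFpr.mul hcont)
  set D : ℝ := ∫ t in t1..t2, F (pr t) with hD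
  set M : ℝ := ∫ t in t1..t2, F (pr t) * pr t with hM
  set v : ℝ := M / D with hv
  have hDpos : 0 < D := by
    apply intervalIntegral.intervalIntegral_pos_of_pos_on hInt1
    · intro x hx
      exact hpos _
    · exact ht
  set g : ℝ → ℝ := fun w => 1 / F w with hgdef
  have hFd : DifferentiableAt ℝ F v := (hsmooth.differentiable two_ne_zero).differentiableAt
  have hgd : DifferentiableAt ℝ g v :=
    (differentiableAt_const (1 : ℝ)).div hFd (hpos v).ne'
  set c : ℝ := deriv g v with hc
  have tangent : ∀ x, g v + c * (x - v) ≤ g x := fun x => tangent_le_aux hconv hgd x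
  -- pointwise inequality
  have hpt : ∀ t ∈ Set.Icc t1 t2,
      (g v - c * v) * F (pr t) + c * (F (pr t) * pr t) ≤ (1 : ℝ) := by
    intro t _
    have h1 := tangent (pr t)
    have h2 := mul_le_mul_of_nonneg_left h1 (hpos (pr t)).le
    have h3 : F (pr t) * g (pr t) = 1 := by
      simp only [hgdef, mul_one_div]
      exact div_self (hpos _).ne'
    nlinarith
  have key : ∫ t in t1..t2, ((g v - c * v) * F (pr t) + c * (F (pr t) * pr t))
      ≤ ∫ _t in t1..t2, (1 : ℝ) := by
    apply intervalIntegral.integral_mono_on ht' _ intervalIntegrable_const hpt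
    exact (hInt1.const_mul _).add (hInt2.const_mul _)
  have hL : ∫ t in t1..t2, ((g v - c * v) * F (pr t) + c * (F (pr t) * pr t))
      = (g v - c * v) * D + c * M := by
    rw [intervalIntegral.integral_add (hInt1.const_mul _) (hInt2.const_mul _),
      intervalIntegral.integral_const_mul, intervalIntegral.integral_const_mul]
  have hR : ∫ _t in t1..t2, (1 : ℝ) = t2 - t1 := by simp
  rw [hL, hR] at key
  have hvD : v * D = M := by
    rw [hv]; field_simp
  have key2 : g v * D ≤ t2 - t1 := by
    have : g v * D = (g v - c * v) * D + c * M := by rw [← hvD]; ring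
    linarith
  have hgv : g v = 1 / F v := rfl
  rw [hgv] at key2
  have hFv : 0 < F v := hpos v
  rw [div_le_iff₀ (by linarith : (0:ℝ) < t2 - t1)]
  have := mul_le_mul_of_nonneg_left key2 hFv.le
  calc D = F v * (1 / F v * D) := by field_simp
    _ ≤ F v * (t2 - t1) := this
end

section
/- Let F̄ be strictly decreasing with convex reciprocal 1/F̄, let t₀ < t₁ < t₂, and let p_r : [t₁, t₂] → ℝ be continuous. Suppose the market clearing condition holds in the form ∫_{t₁}^{t₂} F̄(p_r(t)) dt / (t₂ − t₀) = F̄(x*) for some x*, and suppose (ℓ₋/ℓ₊ + 1)·F̄(x*) > F̄(x* − c) where c > 0 and (t₂ − t₀)/(t₂ − t₁) = (ℓ₋ + ℓ₊)/ℓ₊. Then ∫_{t₁}^{t₂} F̄(p_r(t))·p_r(t) dt < (x* − c) · ∫_{t₁}^{t₂} F̄(p_r(t)) dt; in particular the average price weighted by demand is strictly below x* − c. -/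
/-- A convex function on `ℝ` has a supporting line at every point. -/
lemma exists_supporting_line (f : ℝ → ℝ) (hf : ConvexOn ℝ Set.univ f) (m : ℝ) :
    ∃ s : ℝ, ∀ v : ℝ, f m + s * (v - m) ≤ f v := by
  set S : Set ℝ := (fun v => (f v - f m) / (v - m)) '' Set.Ioi m with hS
  have hne : S.Nonempty := ⟨_, ⟨m + 1, by simp, rfl⟩⟩
  have hbdd : BddBelow S := by
    refine ⟨(f m - f (m - 1)) / (m - (m - 1)), ?_⟩
    rintro y ⟨v, hv, rfl⟩
    exact hf.slope_mono_adjacent (Set.mem_univ _) (Set.mem_univ _) (by linarith) hv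
  refine ⟨sInf S, fun v => ?_⟩
  rcases lt_trichotomy v m with h | h | h
  · have hle : (f m - f v) / (m - v) ≤ sInf S := by
      refine le_csInf hne ?_
      rintro y ⟨w, hw, rfl⟩
      exact hf.slope_mono_adjacent (Set.mem_univ _) (Set.mem_univ _) h hw
    have hmv : 0 < m - v := by linarith
    rw [div_le_iff₀ hmv] at hle
    nlinarith [hle]
  · simp [h]
  · have hle : sInf S ≤ (f v - f m) / (v - m) := csInf_le hbdd ⟨v, h, rfl⟩
    have hvm : 0 < v - m := by linarith
    rw [le_div_iff₀ hvm] at hle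
    linarith

/-- Core inequality of Theorem 4.3: under market clearing and the condition
`(ℓ₋/ℓ₊ + 1) F̄(x*) > F̄(x* - c)`, the demand-weighted total payment during the
decreasing phase is strictly below `(x* - c)` times total demand. -/
theorem stmt_7 (F : ℝ → ℝ)
    (hpos : ∀ v, 0 < F v) (hanti : StrictAnti F)
    (hconv : ConvexOn ℝ Set.univ (fun v => 1 / F v))
    (pr : ℝ → ℝ) (t0 t1 t2 : ℝ) (h01 : t0 < t1) (h12 : t1 < t2)
    (hcont : ContinuousOn pr (Set.Icc t1 t2))
    (lp lm : ℝ) (hlp : 0 < lp) (hlm : 0 < lm)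
    (hratio : (t2 - t0) / (t2 - t1) = (lm + lp) / lp)
    (xstar c : ℝ) (hc : 0 < c)
    (hclear : (∫ t in t1..t2, F (pr t)) / (t2 - t0) = F xstar)
    (hcond : (lm / lp + 1) * F xstar > F (xstar - c)) :
    (∫ t in t1..t2, F (pr t) * pr t) < (xstar - c) * ∫ t in t1..t2, F (pr t) := by
  -- F is continuous since 1/F is convex on univ (hence continuous) and positive
  have hFne : ∀ v, F v ≠ 0 := fun v => (hpos v).ne'
  have hcont1F : Continuous (fun v => 1 / F v) := by
    have := hconv.continuousOn isOpen_univ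
    rwa [← continuousOn_univ]
  have hFcont : Continuous F := by
    have : Continuous (fun v => (1 / F v)⁻¹) := hcont1F.inv₀ (fun v => by
      simp [hFne v])
    simpa [one_div] using this
  -- integrability
  have hprc : ContinuousOn (fun t => F (pr t)) (Set.Icc t1 t2) := hFcont.comp_continuousOn hcont
  have hI1 : IntervalIntegrable (fun t => F (pr t)) MeasureTheory.volume t1 t2 :=
    (hprc.mono (by rw [Set.uIcc_of_le h12.le])).intervalIntegrable
  have hI2 : IntervalIntegrable (fun t => F (pr t) * pr t) MeasureTheory.volume t1 t2 :=
    ((hprc.mul hcont).mono (by rw [Set.uIcc_of_le h12.le])).intervalIntegrable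
  set I := ∫ t in t1..t2, F (pr t) with hIdef
  set J := ∫ t in t1..t2, F (pr t) * pr t with hJdef
  have hIpos : 0 < I := by
    apply intervalIntegral.intervalIntegral_pos_of_pos_on hI1 (fun t _ => hpos (pr t)) h12
  set m := J / I with hmdef
  have hJmI : J = m * I := by rw [hmdef, div_mul_cancel₀ _ hIpos.ne']
  obtain ⟨s, hs⟩ := exists_supporting_line (fun v => 1 / F v) hconv m
  -- pointwise: F (pr t) * (1/F m + s*(pr t - m)) ≤ 1
  have hpt : ∀ t, F (pr t) * (1 / F m + s * (pr t - m)) ≤ 1 := by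
    intro t
    have h1 := hs (pr t)
    have h2 : F (pr t) * (1 / F m + s * (pr t - m)) ≤ F (pr t) * (1 / F (pr t)) :=
      mul_le_mul_of_nonneg_left h1 (hpos _).le
    rwa [mul_one_div_cancel (hFne _)] at h2
  -- integrate
  have hIg : IntervalIntegrable (fun t => F (pr t) * (1 / F m + s * (pr t - m)))
      MeasureTheory.volume t1 t2 := by
    apply ContinuousOn.intervalIntegrable
    apply ContinuousOn.mul (hprc.mono (by rw [Set.uIcc_of_le h12.le]))
    exact (continuousOn_const.add (continuousOn_const.mul
      ((hcont.mono (by rw [Set.uIcc_of_le h12.le])).sub continuousOn_const)))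
  have hint : (∫ t in t1..t2, F (pr t) * (1 / F m + s * (pr t - m))) ≤ ∫ t in t1..t2, (1:ℝ) := by
    apply intervalIntegral.integral_mono_on h12.le hIg (intervalIntegrable_const)
    exact fun t _ => hpt t
  have hexp : (∫ t in t1..t2, F (pr t) * (1 / F m + s * (pr t - m)))
      = (1 / F m) * I + s * (J - m * I) := by
    have : ∀ t, F (pr t) * (1 / F m + s * (pr t - m))
        = (1 / F m) * F (pr t) + s * (F (pr t) * pr t - m * F (pr t)) := by
      intro t; ring
    rw [intervalIntegral.integral_congr (fun t _ => this t)]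
    rw [intervalIntegral.integral_add ((hI1.const_mul _))
        (((hI2.sub (hI1.const_mul m))).const_mul s),
      intervalIntegral.integral_const_mul, intervalIntegral.integral_const_mul,
      intervalIntegral.integral_sub hI2 (hI1.const_mul m),
      intervalIntegral.integral_const_mul]
  rw [hexp] at hint
  rw [← hJmI, sub_self, mul_zero, add_zero] at hint
  have hone : (∫ (_ : ℝ) in t1..t2, (1:ℝ)) = t2 - t1 := by simp
  rw [hone] at hint
  -- so I / F m ≤ t2 - t1, i.e. F m ≥ I/(t2-t1)
  have hFm : I / (t2 - t1) ≤ F m := by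
    rw [div_le_iff₀ (by linarith : (0:ℝ) < t2 - t1)]
    calc I = 1 / F m * I * F m := by
          rw [one_div, inv_mul_eq_div, div_mul_cancel₀ _ (hFne m)]
    _ ≤ (t2 - t1) * F m := mul_le_mul_of_nonneg_right hint (hpos m).le
    _ = F m * (t2 - t1) := mul_comm _ _
  -- market clearing: I = (t2 - t0) * F xstar
  have ht20 : (0:ℝ) < t2 - t0 := by linarith
  have hIeq : I = (t2 - t0) * F xstar := by
    field_simp at hclear; linarith [hclear]
  have hkey : F (xstar - c) < F m := by
    have h1 : I / (t2 - t1) = (lm / lp + 1) * F xstar := by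
      have h2 : (t2 - t0) / (t2 - t1) = lm / lp + 1 := by
        rw [hratio]; field_simp
      calc I / (t2 - t1) = (t2 - t0) / (t2 - t1) * F xstar := by rw [hIeq]; ring
      _ = (lm / lp + 1) * F xstar := by rw [h2]
    calc F (xstar - c) < (lm / lp + 1) * F xstar := hcond
    _ = I / (t2 - t1) := h1.symm
    _ ≤ F m := hFm
  have hmlt : m < xstar - c := by
    by_contra h
    push_neg at h
    rcases eq_or_lt_of_le h with h' | h'
    · rw [h'] at hkey; exact lt_irrefl _ hkey
    · exact absurd hkey (not_lt.mpr (hanti h').le)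
  calc J = m * I := hJmI
  _ < (xstar - c) * I := by exact mul_lt_mul_of_pos_right hmlt hIpos
end

section
/- Suppose a stable price cycle satisfies the market clearing condition λ_d·(t₂ − t₀) = ∫_{t₁}^{t₂} λ_r·F̄(p(t) + c_r·η(n(t))) dt, where t₂ − t₀ = ((ℓ₋+ℓ₊)/ℓ₊)·(t₂ − t₁). Then the minimum trip price p̲ in the cycle satisfies p̲ ≤ F̄^{−1}((ℓ₋ + ℓ₊)·λ_d / (ℓ₊·λ_r)). Consequently, if the platform imposes a price floor p_floor > F̄^{−1}((ℓ₋ + ℓ₊)·λ_d / (ℓ₊·λ_r)), then no stable price cycle exists. -/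
/-! The nonnegative surcharge `c_r η` only lowers the demand rate `λ_r F̄(p + c_r η)` below
`λ_r F̄(p̲)`, so market clearing forces `λ_d (t₂ - t₀) ≤ (t₂ - t₁) λ_r F̄(p̲)`, i.e. `F̄(p̲) ≥ (ℓ₋ + ℓ₊) λ_d / (ℓ₊ λ_r)`;
since `F̄` is strictly decreasing this bounds `p̲` by `F̄⁻¹` of that ratio. -/

open MeasureTheory Set

lemma le_of_mul_sub_le_intervalIntegral {f : ℝ → ℝ} {a b c M : ℝ} (hab : a < b)
    (hf : IntervalIntegrable f volume a b) (hfM : ∀ t ∈ Icc a b, f t ≤ M)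
    (hc : c * (b - a) ≤ ∫ t in a..b, f t) : c ≤ M := by
  have hint : (∫ t in a..b, f t) ≤ ∫ _ in a..b, M :=
    intervalIntegral.integral_mono_on hab.le hf intervalIntegrable_const hfM
  rw [intervalIntegral.integral_const, smul_eq_mul, mul_comm] at hint
  exact le_of_mul_le_mul_right (hc.trans hint) (sub_pos.2 hab)

lemma StrictAnti.le_of_le_apply_of_rightInverse {F G : ℝ → ℝ} (hF : StrictAnti F)
    (hG : Function.RightInverse G F) {x y : ℝ} (h : y ≤ F x) : x ≤ G y :=
  hF.le_iff_ge.1 (by rwa [hG y])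

theorem stmt_9_general (F Finv : ℝ → ℝ)
    (hanti : StrictAnti F) (hFinv : ∀ y, F (Finv y) = y)
    (lamd lamr lp lm cr : ℝ)
    (hlamr : 0 < lamr) (hlp : 0 < lp) (hcr : 0 ≤ cr)
    (eta n p : ℝ → ℝ) (heta : ∀ x, 0 ≤ eta x)
    (t0 t1 t2 : ℝ) (h12 : t1 < t2)
    (hratio : t2 - t0 = ((lm + lp) / lp) * (t2 - t1))
    (pmin : ℝ) (hpmin : ∀ t, pmin ≤ p t)
    (hint : IntervalIntegrable (fun t => lamr * F (p t + cr * eta (n t)))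
      MeasureTheory.volume t1 t2)
    (hclear : lamd * (t2 - t0) = ∫ t in t1..t2, lamr * F (p t + cr * eta (n t))) :
    pmin ≤ Finv ((lm + lp) * lamd / (lp * lamr)) ∧
      ∀ pfloor : ℝ, Finv ((lm + lp) * lamd / (lp * lamr)) < pfloor → ¬ pfloor ≤ pmin := by
  have hdemand : ∀ t, lamr * F (p t + cr * eta (n t)) ≤ lamr * F pmin := fun t =>
    mul_le_mul_of_nonneg_left
      (hanti.antitone (le_add_of_le_of_nonneg (hpmin t) (mul_nonneg hcr (heta (n t)))))
      hlamr.le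
  have hmean : lamd * ((lm + lp) / lp) ≤ lamr * F pmin :=
    le_of_mul_sub_le_intervalIntegral h12 hint (fun t _ => hdemand t)
      (by rw [mul_assoc, ← hratio, hclear])
  have hratio_le : (lm + lp) * lamd / (lp * lamr) ≤ F pmin := by
    rw [div_le_iff₀ (mul_pos hlp hlamr)]
    rw [mul_div_assoc', div_le_iff₀ hlp] at hmean
    linarith
  have hmain := hanti.le_of_le_apply_of_rightInverse hFinv hratio_le
  exact ⟨hmain, fun pfloor hlt hle => (hle.trans hmain).not_gt hlt⟩

/-- Price floors break cycles: under market clearing, the minimum cycle price satisfies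
`p̲ ≤ F̄⁻¹((ℓ₋+ℓ₊)λ_d/(ℓ₊ λ_r))`; hence any price floor strictly above this value rules
out stable price cycles. -/
theorem stmt_9 (F Finv : ℝ → ℝ)
    (hanti : StrictAnti F) (hFinv : ∀ y, F (Finv y) = y)
    (lamd lamr lp lm cr : ℝ)
    (hlamd : 0 < lamd) (hlamr : 0 < lamr) (hlp : 0 < lp) (hlm : 0 < lm) (hcr : 0 ≤ cr)
    (eta n p : ℝ → ℝ) (heta : ∀ x, 0 ≤ eta x)
    (t0 t1 t2 : ℝ) (h01 : t0 < t1) (h12 : t1 < t2)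
    (hratio : t2 - t0 = ((lm + lp) / lp) * (t2 - t1))
    (pmin : ℝ) (hpmin : ∀ t, pmin ≤ p t)
    (hint : IntervalIntegrable (fun t => lamr * F (p t + cr * eta (n t)))
      MeasureTheory.volume t1 t2)
    (hclear : lamd * (t2 - t0) = ∫ t in t1..t2, lamr * F (p t + cr * eta (n t))) :
    pmin ≤ Finv ((lm + lp) * lamd / (lp * lamr)) ∧
      ∀ pfloor : ℝ, Finv ((lm + lp) * lamd / (lp * lamr)) < pfloor → ¬ pfloor ≤ pmin :=
  stmt_9_general F Finv hanti hFinv lamd lamr lp lm cr hlamr hlp hcr eta n p heta t0 t1 t2 h12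
    hratio pmin hpmin hint hclear
end

section
/- Under the assumptions of the previous statement (c_r = 0, V ~ Unif[0,1], price decreasing at rate ℓ₋ on (t₁,t₂)), non-negativity of N(t₁) and N(t₂) implies p̲ ≥ 1 − λ_d/λ_r − sqrt(2·n̂·ℓ₋/λ_r) and p̄ ≤ 1 − λ_d/λ_r + sqrt(2·n̂·ℓ₋/λ_r); hence the price range satisfies p̄ − p̲ ≤ sqrt(8·n̂·ℓ₋/λ_r) = O(√ℓ₋). -/
lemma abs_le_sqrt_div_of_mul_sq_le {c x n : ℝ} (hc : 0 < c) (h : c * x ^ 2 ≤ n) :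
    |x| ≤ √(n / c) :=
  Real.abs_le_sqrt <| (le_div_iff₀ hc).mpr (by linarith)

lemma sqrt_eight_mul_eq_two_mul_sqrt_two_mul (y : ℝ) : √(8 * y) = 2 * √(2 * y) := by
  rw [show 8 * y = 2 ^ 2 * (2 * y) by ring, Real.sqrt_mul (by positivity),
    Real.sqrt_sq zero_le_two]

theorem stmt_12_general (lamd lamr lm pmax pmin nhat N1 N2 : ℝ)
    (hlamr : 0 < lamr) (hlm : 0 < lm)
    (hN1 : N1 = nhat - (lamr / (2 * lm)) * (1 - lamd / lamr - pmax) ^ 2)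
    (hN2 : N2 = nhat - (lamr / (2 * lm)) * (1 - lamd / lamr - pmin) ^ 2)
    (hN1pos : 0 ≤ N1) (hN2pos : 0 ≤ N2) :
    pmin ≥ 1 - lamd / lamr - Real.sqrt (2 * nhat * lm / lamr) ∧
      pmax ≤ 1 - lamd / lamr + Real.sqrt (2 * nhat * lm / lamr) ∧
      pmax - pmin ≤ Real.sqrt (8 * nhat * lm / lamr) := by
  have hc : 0 < lamr / (2 * lm) := by positivity
  have hratio : nhat / (lamr / (2 * lm)) = 2 * nhat * lm / lamr := by field_simp
  have hmax :=
    abs_le_sqrt_div_of_mul_sq_le hc (n := nhat) (x := 1 - lamd / lamr - pmax) (by linarith)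
  have hmin :=
    abs_le_sqrt_div_of_mul_sq_le hc (n := nhat) (x := 1 - lamd / lamr - pmin) (by linarith)
  rw [hratio, abs_le] at hmax hmin
  have hwidth : √(8 * nhat * lm / lamr) = 2 * √(2 * nhat * lm / lamr) := by
    simpa only [mul_div_assoc, mul_assoc] using
      sqrt_eight_mul_eq_two_mul_sqrt_two_mul (nhat * lm / lamr)
  exact ⟨by linarith, by linarith, by linarith⟩

/-- Proposition D.1: nonnegativity of the endpoint driver counts forces
`p̄ - p̲ ≤ √(8 n̂ ℓ₋ / λ_r)`, i.e. the price range of a cycle is `O(√ℓ₋)`. -/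
theorem stmt_12 (lamd lamr lm pmax pmin nhat N1 N2 : ℝ)
    (hlamr : 0 < lamr) (hlm : 0 < lm) (hnhat : 0 ≤ nhat) (hpp : pmin ≤ pmax)
    (hN1 : N1 = nhat - (lamr / (2 * lm)) * (1 - lamd / lamr - pmax) ^ 2)
    (hN2 : N2 = nhat - (lamr / (2 * lm)) * (1 - lamd / lamr - pmin) ^ 2)
    (hN1pos : 0 ≤ N1) (hN2pos : 0 ≤ N2) :
    pmin ≥ 1 - lamd / lamr - Real.sqrt (2 * nhat * lm / lamr) ∧
      pmax ≤ 1 - lamd / lamr + Real.sqrt (2 * nhat * lm / lamr) ∧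
      pmax - pmin ≤ Real.sqrt (8 * nhat * lm / lamr) :=
  stmt_12_general lamd lamr lm pmax pmin nhat N1 N2 hlamr hlm hN1 hN2 hN1pos hN2pos
end
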